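/- In a firm braided monoidal category, idempotent subunits s ≤ t in the subobject ordering (s factors through t) if and only if the subobjects represented by s and by λ_I ∘ (s ⊗ t) are equal. Consequently, the idempotent subunits form a meet-semilattice where the meet of s and t is λ_I ∘ (s ⊗ t) and the top element is id_I. -/

import Mathlib

open CategoryTheory MonoidalCategory

/-- A braided monoidal category is *firm* when `s ⊗ id_T` is monic for all idempotent
subunits `s : S ↪ I` and `t : T ↪ I`. -/
def Firm (C : Type*) [Category C] [MonoidalCategory C] [BraidedCategory C] : Prop :=
  ∀ {S T : C} (s : S ⟶ 𝟙_ C) (t : T ⟶ 𝟙_ C), Mono s → Mono t →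
    IsIso (s ⊗ₘ 𝟙 S) → IsIso (t ⊗ₘ 𝟙 T) → Mono (s ⊗ₘ 𝟙 T)

/-- `s : S ↪ I` is an idempotent subunit. -/
def IsIdemSubunit {C : Type*} [Category C] [MonoidalCategory C] {S : C}
    (s : S ⟶ 𝟙_ C) : Prop :=
  Mono s ∧ IsIso (s ⊗ₘ 𝟙 S)

/-- The subobject order: `s ≤ t` iff `s` factors through `t`. -/
def SubLe {C : Type*} [Category C] [MonoidalCategory C] {S T : C}
    (s : S ⟶ 𝟙_ C) (t : T ⟶ 𝟙_ C) : Prop :=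
  ∃ f : S ⟶ T, s = f ≫ t

/-- Two morphisms into `I` represent the same subobject of `I`. -/
def SameSub {C : Type*} [Category C] [MonoidalCategory C] {S T : C}
    (s : S ⟶ 𝟙_ C) (t : T ⟶ 𝟙_ C) : Prop :=
  SubLe s t ∧ SubLe t s

/-- The product of subunits `s, t`: `λ_I ∘ (s ⊗ t) : S ⊗ T → I`. -/
def subunitMul {C : Type*} [Category C] [MonoidalCategory C] {S T : C}
    (s : S ⟶ 𝟙_ C) (t : T ⟶ 𝟙_ C) : S ⊗ T ⟶ 𝟙_ C :=
  (s ⊗ₘ t) ≫ (λ_ (𝟙_ C)).hom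

/-!
The product `subunitMul s t` always factors through `s` and through `t` (absorb the other
factor with a unitor), and it is monotone in both arguments. An idempotent `r` satisfies
`r ≤ r ⊗ r`, since `r ⊗ id_R` is invertible, so any common lower bound `r` of `s` and `t`
lies below `s ⊗ t`. Firmness makes `s ⊗ t` monic, and the braiding, which shuffles
`(S ⊗ T) ⊗ (S ⊗ T)` into `(S ⊗ S) ⊗ (T ⊗ T)`, makes it idempotent.
-/

namespace SubLe

variable {C : Type*} [Category C] [MonoidalCategory C]

lemma refl {S : C} (s : S ⟶ 𝟙_ C) : SubLe s s :=
  ⟨𝟙 S, (Category.id_comp s).symm⟩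

lemma trans {R S T : C} {r : R ⟶ 𝟙_ C} {s : S ⟶ 𝟙_ C} {t : T ⟶ 𝟙_ C} :
    SubLe r s → SubLe s t → SubLe r t
  | ⟨f, hf⟩, ⟨g, hg⟩ => ⟨f ≫ g, by rw [hf, hg, Category.assoc]⟩

lemma le_id {S : C} (s : S ⟶ 𝟙_ C) : SubLe s (𝟙 (𝟙_ C)) :=
  ⟨s, (Category.comp_id s).symm⟩

end SubLe

section Monoidal

variable {C : Type*} [Category C] [MonoidalCategory C]

lemma subunitMul_eq_comp_right {S T : C} (s : S ⟶ 𝟙_ C) (t : T ⟶ 𝟙_ C) :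
    subunitMul s t = ((s ⊗ₘ 𝟙 T) ≫ (λ_ T).hom) ≫ t := by
  simp [subunitMul, MonoidalCategory.tensorHom_def]

lemma subunitMul_eq_comp_left {S T : C} (s : S ⟶ 𝟙_ C) (t : T ⟶ 𝟙_ C) :
    subunitMul s t = ((𝟙 S ⊗ₘ t) ≫ (ρ_ S).hom) ≫ s := by
  simp [subunitMul, MonoidalCategory.tensorHom_def', unitors_equal]

lemma subunitMul_le_right {S T : C} (s : S ⟶ 𝟙_ C) (t : T ⟶ 𝟙_ C) :
    SubLe (subunitMul s t) t :=
  ⟨_, subunitMul_eq_comp_right s t⟩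

lemma subunitMul_le_left {S T : C} (s : S ⟶ 𝟙_ C) (t : T ⟶ 𝟙_ C) :
    SubLe (subunitMul s t) s :=
  ⟨_, subunitMul_eq_comp_left s t⟩

lemma subunitMul_mono {R R' S T : C} {r : R ⟶ 𝟙_ C} {r' : R' ⟶ 𝟙_ C}
    {s : S ⟶ 𝟙_ C} {t : T ⟶ 𝟙_ C} : SubLe r s → SubLe r' t →
    SubLe (subunitMul r r') (subunitMul s t)
  | ⟨f, hf⟩, ⟨g, hg⟩ => ⟨f ⊗ₘ g, by simp [subunitMul, hf, hg]⟩

lemma le_subunitMul_self {R : C} {r : R ⟶ 𝟙_ C} (hr : IsIso (r ⊗ₘ 𝟙 R)) :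
    SubLe r (subunitMul r r) :=
  ⟨inv ((r ⊗ₘ 𝟙 R) ≫ (λ_ R).hom), by rw [subunitMul_eq_comp_right, IsIso.inv_hom_id_assoc]⟩

lemma le_subunitMul {R S T : C} {r : R ⟶ 𝟙_ C} {s : S ⟶ 𝟙_ C} {t : T ⟶ 𝟙_ C}
    (hr : IsIso (r ⊗ₘ 𝟙 R)) (hs : SubLe r s) (ht : SubLe r t) : SubLe r (subunitMul s t) :=
  (le_subunitMul_self hr).trans (subunitMul_mono hs ht)

end Monoidal

section Braided

variable {C : Type*} [Category C] [MonoidalCategory C] [BraidedCategory C]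

instance isIso_tensorμ (X₁ X₂ Y₁ Y₂ : C) : IsIso (tensorμ X₁ X₂ Y₁ Y₂) :=
  ⟨tensorδ X₁ X₂ Y₁ Y₂, tensorμ_tensorδ X₁ X₂ Y₁ Y₂, tensorδ_tensorμ X₁ X₂ Y₁ Y₂⟩

lemma isIso_tensorHom_tensorHom_id {S T X Y : C} (f : S ⟶ X) (g : T ⟶ Y)
    [IsIso (f ⊗ₘ 𝟙 S)] [IsIso (g ⊗ₘ 𝟙 T)] : IsIso ((f ⊗ₘ g) ⊗ₘ 𝟙 (S ⊗ T)) := by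
  have h : (f ⊗ₘ g) ⊗ₘ 𝟙 (S ⊗ T) =
      tensorμ S T S T ≫ ((f ⊗ₘ 𝟙 S) ⊗ₘ (g ⊗ₘ 𝟙 T)) ≫ inv (tensorμ X Y S T) := by
    rw [← tensorμ_natural_assoc, id_tensorHom_id, IsIso.hom_inv_id, Category.comp_id]
  rw [h]
  infer_instance

lemma isIdemSubunit_subunitMul (firm : Firm C) {S T : C} {s : S ⟶ 𝟙_ C} {t : T ⟶ 𝟙_ C}
    (hs : IsIdemSubunit s) (ht : IsIdemSubunit t) : IsIdemSubunit (subunitMul s t) := by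
  have := hs.2
  have := ht.1
  have := ht.2
  have := firm s t hs.1 ht.1 hs.2 ht.2
  constructor
  · rw [subunitMul_eq_comp_right]
    infer_instance
  · have := isIso_tensorHom_tensorHom_id s t
    rw [subunitMul, ← Category.comp_id (𝟙 (S ⊗ T)), ← tensorHom_comp_tensorHom]
    infer_instance

end Braided

/-- In a firm braided monoidal category, `s ≤ t` in the subobject ordering iff `s` and
`λ_I ∘ (s ⊗ t)` represent the same subobject; consequently the idempotent subunits form
a meet-semilattice with meet `λ_I ∘ (s ⊗ t)` and top `id_I`. -/
theorem stmt5 {C : Type*} [Category C] [MonoidalCategory C] [BraidedCategory C]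
    (firm : Firm C) :
    -- characterisation of the order
    (∀ {S T : C} (s : S ⟶ 𝟙_ C) (t : T ⟶ 𝟙_ C),
      IsIdemSubunit s → IsIdemSubunit t → (SubLe s t ↔ SameSub s (subunitMul s t))) ∧
    -- `subunitMul s t` is the meet of `s` and `t` among idempotent subunits
    (∀ {S T : C} (s : S ⟶ 𝟙_ C) (t : T ⟶ 𝟙_ C),
      IsIdemSubunit s → IsIdemSubunit t →
      IsIdemSubunit (subunitMul s t) ∧
      SubLe (subunitMul s t) s ∧ SubLe (subunitMul s t) t ∧
      (∀ {R : C} (r : R ⟶ 𝟙_ C), IsIdemSubunit r →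
        SubLe r s → SubLe r t → SubLe r (subunitMul s t))) ∧
    -- `id_I` is the top element
    (∀ {S : C} (s : S ⟶ 𝟙_ C), IsIdemSubunit s → SubLe s (𝟙 (𝟙_ C))) := by
  refine ⟨fun s t hs _ => ⟨fun hle => ?_, fun ⟨hle, _⟩ => ?_⟩, fun s t hs ht => ?_,
    fun s _ => SubLe.le_id s⟩
  · exact ⟨le_subunitMul hs.2 (SubLe.refl s) hle, subunitMul_le_left s t⟩
  · exact hle.trans (subunitMul_le_right s t)
  · exact ⟨isIdemSubunit_subunitMul firm hs ht, subunitMul_le_left s t,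
      subunitMul_le_right s t, fun _ hr => le_subunitMul hr.2⟩
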